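/- Let a(n,k,s) be the number of k-chains in E*_n whose elements all have signature at most s. For all n >= 3, s >= 1, and all k: a(n,k,s) = a(n-1,k,s-1) + a(n-1,k,s+1) - a(n-2,k,s) + a(n-1,k-1,s-1) + a(n-1,k-1,s+1) - a(n-2,k-1,s). -/

import Mathlib

/-- `chainA n k s` is the number of `k`-element chains in
`E*_n = {(a,b) : 1 ≤ a+b ≤ n}` all of whose elements have signature `a - b` at most `s`;
it is `0` for `k < 0` or `s < 0`. -/
noncomputable def chainA (n : ℕ) (k s : ℤ) : ℕ :=
  if k < 0 ∨ s < 0 then 0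
  else Nat.card {S : Finset (ℕ × ℕ) // S.card = k.toNat ∧
    (∀ p ∈ S, 1 ≤ p.1 + p.2 ∧ p.1 + p.2 ≤ n) ∧
    IsChain (· ≤ ·) (S : Set (ℕ × ℕ)) ∧
    (∀ p ∈ S, (p.1 : ℤ) - (p.2 : ℤ) ≤ s)}

/-!
Every chain of `E*_n` lies in `{b ≥ 1}` or in `{a ≥ 1}`, because a point `(0, b)` with `b ≥ 1`
and a point `(a, 0)` with `a ≥ 1` are incomparable. Hence chains are counted by
inclusion–exclusion over these two parts and their intersection `{a, b ≥ 1}`. Translating by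
`(0, 1)`, `(1, 0)` and `(1, 1)` identifies the three parts with `E_{n-1}` cut at signature
`s + 1`, `E_{n-1}` cut at `s - 1` and `E_{n-2}` cut at `s`, where `E_m = {a + b ≤ m}` contains
the origin. The origin lies below every point, so the `k`-chains of a cut `E_m` number
`a(m, k, ·) + a(m, k - 1, ·)`; this produces the six terms of the recursion.
-/

open Finset

namespace Finset

variable {α : Type*} [Preorder α]

open Classical in
noncomputable def chains (X : Finset α) (k : ℕ) : Finset (Finset α) :=
  {S ∈ X.powersetCard k | IsChain (· ≤ ·) (S : Set α)}

theorem mem_chains {X S : Finset α} {k : ℕ} :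
    S ∈ X.chains k ↔ S ⊆ X ∧ #S = k ∧ IsChain (· ≤ ·) (S : Set α) := by
  simp [chains, mem_powersetCard, and_assoc]

theorem chains_zero (X : Finset α) : X.chains 0 = {∅} := by
  ext S
  simp only [mem_chains, card_eq_zero, mem_singleton]
  constructor
  · exact fun h => h.2.1
  · rintro rfl
    simp

theorem _root_.OrderEmbedding.isChain_image_iff {β : Type*} [Preorder β] (e : α ↪o β)
    {s : Set α} :
    IsChain (· ≤ ·) (e '' s) ↔ IsChain (· ≤ ·) s :=
  ⟨fun h => by
    simpa [Set.preimage_image_eq _ e.injective] using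
      h.preimage _ _ e e.injective fun _ _ => e.le_iff_le.1,
    e.monotone.isChain_image⟩

theorem card_chains_map {β : Type*} [Preorder β] (e : α ↪o β) (X : Finset α) (k : ℕ) :
    #((X.map e.toEmbedding).chains k) = #(X.chains k) := by
  classical
  rw [chains, chains, powersetCard_map, filter_map, card_map]
  congr 1
  refine filter_congr fun S _ => ?_
  simp only [Function.comp_apply, RelEmbedding.coe_toEmbedding, mapEmbedding_apply, coe_map,
    e.isChain_image_iff]

theorem card_chains_succ_insert_of_forall_le [DecidableEq α] {X : Finset α} {m : α}
    (hm : m ∉ X) (hle : ∀ x ∈ X, m ≤ x) (k : ℕ) :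
    #((insert m X).chains (k + 1)) = #(X.chains (k + 1)) + #(X.chains k) := by
  classical
  have isChain_insert_iff : ∀ S ⊆ X,
      IsChain (· ≤ ·) (↑(insert m S) : Set α) ↔ IsChain (· ≤ ·) (S : Set α) := by
    intro S hS
    rw [coe_insert]
    exact ⟨fun h => h.mono (Set.subset_insert _ _),
      fun h => h.insert fun x hx _ => .inl (hle x (hS hx))⟩
  rw [chains, chains, chains, powersetCard_succ_insert hm, filter_union, filter_image,
    card_union_of_disjoint, card_image_of_injOn]
  · congr 2
    exact filter_congr fun S hS => isChain_insert_iff S (mem_powersetCard.1 hS).1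
  · intro S hS T hT hST
    have hmS : m ∉ S := fun h => hm ((mem_powersetCard.1 (mem_filter.1 hS).1).1 h)
    have hmT : m ∉ T := fun h => hm ((mem_powersetCard.1 (mem_filter.1 hT).1).1 h)
    rw [← erase_insert hmS, ← erase_insert hmT]
    exact congrArg (·.erase m) hST
  · refine disjoint_left.2 fun S hS hS' => ?_
    obtain ⟨T, -, rfl⟩ := mem_image.1 hS'
    exact hm ((mem_powersetCard.1 (mem_filter.1 hS).1).1 (mem_insert_self m T))

theorem card_chains_union_add_card_chains_inter [DecidableEq α] {Y Z : Finset α}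
    (hYZ : ∀ y ∈ Y \ Z, ∀ z ∈ Z \ Y, ¬ y ≤ z ∧ ¬ z ≤ y) (k : ℕ) :
    #((Y ∪ Z).chains k) + #((Y ∩ Z).chains k) = #(Y.chains k) + #(Z.chains k) := by
  have chains_union : (Y ∪ Z).chains k = Y.chains k ∪ Z.chains k := by
    ext S
    simp only [mem_union, mem_chains]
    constructor
    · rintro ⟨hS, hk, hc⟩
      by_contra! h
      obtain ⟨z, hzS, hzY⟩ := not_subset.1 fun hY => h.1 hY hk hc
      obtain ⟨y, hyS, hyZ⟩ := not_subset.1 fun hZ => h.2 hZ hk hc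
      have hy : y ∈ Y := (mem_union.1 (hS hyS)).resolve_right hyZ
      have hz : z ∈ Z := (mem_union.1 (hS hzS)).resolve_left hzY
      have hyz := hYZ y (mem_sdiff.2 ⟨hy, hyZ⟩) z (mem_sdiff.2 ⟨hz, hzY⟩)
      exact (hc hyS hzS fun heq => hzY (heq ▸ hy)).elim hyz.1 hyz.2
    · rintro (⟨hS, h⟩ | ⟨hS, h⟩)
      exacts [⟨hS.trans subset_union_left, h⟩, ⟨hS.trans subset_union_right, h⟩]
  have chains_inter : (Y ∩ Z).chains k = Y.chains k ∩ Z.chains k := by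
    ext S
    simp only [mem_inter, mem_chains, subset_inter_iff]
    tauto
  rw [chains_union, chains_inter, card_union_add_card_inter]

end Finset

def translateOrderEmbedding {M : Type*} [AddCommMonoid M] [PartialOrder M]
    [IsOrderedCancelAddMonoid M] (v : M) : M ↪o M :=
  OrderEmbedding.ofMapLEIff (· + v) fun _ _ => add_le_add_iff_right v

/-- `E_n` cut at signature `s`; unlike `E*_n` it contains the origin. -/
def region (n : ℕ) (s : ℤ) : Finset (ℕ × ℕ) :=
  {p ∈ range (n + 1) ×ˢ range (n + 1) | p.1 + p.2 ≤ n ∧ (p.1 : ℤ) - p.2 ≤ s}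

theorem mem_region {n : ℕ} {s : ℤ} {p : ℕ × ℕ} :
    p ∈ region n s ↔ p.1 + p.2 ≤ n ∧ (p.1 : ℤ) - p.2 ≤ s := by
  simp only [region, mem_filter, mem_product, mem_range, and_iff_right_iff_imp]
  omega

def shiftedRegion (n : ℕ) (s : ℤ) (v : ℕ × ℕ) : Finset (ℕ × ℕ) :=
  (region n s).map (translateOrderEmbedding v).toEmbedding

theorem mem_shiftedRegion {n : ℕ} {s : ℤ} {i j : ℕ} {p : ℕ × ℕ} :
    p ∈ shiftedRegion n s (i, j) ↔
      i ≤ p.1 ∧ j ≤ p.2 ∧ p.1 + p.2 ≤ n + i + j ∧ (p.1 : ℤ) - p.2 ≤ s + i - j := by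
  simp only [shiftedRegion, mem_map, mem_region, RelEmbedding.coe_toEmbedding,
    translateOrderEmbedding, OrderEmbedding.coe_ofMapLEIff]
  constructor
  · rintro ⟨q, hq, rfl⟩
    simp only [Prod.fst_add, Prod.snd_add]
    push_cast
    omega
  · intro hp
    refine ⟨(p.1 - i, p.2 - j), ?_, ?_⟩
    · push_cast [hp.1, hp.2.1]
      omega
    · ext <;> simp only [Prod.mk_add_mk] <;> omega

section RegionDecomposition

variable (m : ℕ) (s : ℤ)

theorem region_erase_zero_eq_union :
    (region (m + 2) s).erase 0 = shiftedRegion (m + 1) (s + 1) (0, 1) ∪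
      shiftedRegion (m + 1) (s - 1) (1, 0) := by
  ext p
  simp only [mem_erase, mem_union, mem_shiftedRegion, mem_region, ne_eq, Prod.ext_iff,
    Prod.fst_zero, Prod.snd_zero]
  push_cast
  omega

theorem shiftedRegion_inter_shiftedRegion :
    shiftedRegion (m + 1) (s + 1) (0, 1) ∩ shiftedRegion (m + 1) (s - 1) (1, 0) =
      shiftedRegion m s (1, 1) := by
  ext p
  simp only [mem_inter, mem_shiftedRegion]
  push_cast
  omega

theorem not_le_of_mem_shiftedRegion_sdiff :
    ∀ y ∈ shiftedRegion (m + 1) (s + 1) (0, 1) \ shiftedRegion (m + 1) (s - 1) (1, 0),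
    ∀ z ∈ shiftedRegion (m + 1) (s - 1) (1, 0) \ shiftedRegion (m + 1) (s + 1) (0, 1),
      ¬ y ≤ z ∧ ¬ z ≤ y := by
  intro y hy z hz
  simp only [mem_sdiff, mem_shiftedRegion] at hy hz
  simp only [Prod.le_def]
  push_cast at hy hz
  omega

end RegionDecomposition

theorem card_chains_region_succ (n : ℕ) {s : ℤ} (hs : 0 ≤ s) (k : ℕ) :
    #((region n s).chains (k + 1)) =
      #(((region n s).erase 0).chains (k + 1)) + #(((region n s).erase 0).chains k) := by
  have h0 : (0 : ℕ × ℕ) ∈ region n s := mem_region.2 (by simpa using hs)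
  conv_lhs => rw [← insert_erase h0]
  exact card_chains_succ_insert_of_forall_le (notMem_erase 0 _) (fun _ _ => zero_le) k

theorem chainA_eq_card_chains (n : ℕ) {k s : ℤ} (hk : 0 ≤ k) (hs : 0 ≤ s) :
    chainA n k s = #(((region n s).erase 0).chains k.toNat) := by
  rw [chainA, if_neg (by omega), ← Nat.card_eq_finsetCard]
  refine Nat.card_congr (Equiv.subtypeEquivRight fun S => ?_)
  simp only [mem_chains, subset_iff, mem_erase, mem_region, ne_eq, Prod.ext_iff, Prod.fst_zero,
    Prod.snd_zero]
  constructor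
  · rintro ⟨hcard, hsum, hchain, hsig⟩
    refine ⟨fun p hp => ⟨?_, (hsum p hp).2, hsig p hp⟩, hcard, hchain⟩
    have := hsum p hp
    omega
  · rintro ⟨hsub, hcard, hchain⟩
    exact ⟨hcard, fun p hp => ⟨by have := hsub hp; omega, (hsub hp).2.1⟩, hchain,
      fun p hp => (hsub hp).2.2⟩

theorem card_chains_region_eq_chainA_add (n : ℕ) {k s : ℤ} (hk : 0 ≤ k) (hs : 0 ≤ s) :
    (#((region n s).chains k.toNat) : ℤ) = chainA n k s + chainA n (k - 1) s := by
  rcases hk.eq_or_lt with rfl | hk1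
  · rw [chainA_eq_card_chains n le_rfl hs]
    simp [chains_zero, chainA]
  · obtain ⟨j, hj⟩ : ∃ j : ℕ, k.toNat = j + 1 := ⟨k.toNat - 1, by omega⟩
    rw [hj, card_chains_region_succ n hs, chainA_eq_card_chains n hk hs,
      chainA_eq_card_chains n (by omega) hs, hj, show (k - 1).toNat = j by omega]
    push_cast
    ring

/-- For `n ≥ 3`, `s ≥ 1` and all `k`:
`a(n,k,s) = a(n-1,k,s-1) + a(n-1,k,s+1) - a(n-2,k,s)
  + a(n-1,k-1,s-1) + a(n-1,k-1,s+1) - a(n-2,k-1,s)`. -/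
theorem chainA_simple_recursion (n : ℕ) (hn : 3 ≤ n) (s : ℤ) (hs : 1 ≤ s) (k : ℤ) :
    (chainA n k s : ℤ) =
      chainA (n - 1) k (s - 1) + chainA (n - 1) k (s + 1) - chainA (n - 2) k s
      + chainA (n - 1) (k - 1) (s - 1) + chainA (n - 1) (k - 1) (s + 1)
      - chainA (n - 2) (k - 1) s := by
  rcases lt_or_ge k 0 with hk | hk
  · simp [chainA, hk, show k - 1 < 0 by omega]
  obtain ⟨m, rfl⟩ : ∃ m, n = m + 2 := ⟨n - 2, by omega⟩
  have key := card_chains_union_add_card_chains_inter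
    (not_le_of_mem_shiftedRegion_sdiff m s) k.toNat
  rw [← region_erase_zero_eq_union, shiftedRegion_inter_shiftedRegion] at key
  simp only [shiftedRegion, card_chains_map] at key
  have h₁ := card_chains_region_eq_chainA_add (m + 1) hk (show 0 ≤ s + 1 by omega)
  have h₂ := card_chains_region_eq_chainA_add (m + 1) hk (show 0 ≤ s - 1 by omega)
  have h₃ := card_chains_region_eq_chainA_add m hk (show 0 ≤ s by omega)
  rw [show m + 2 - 1 = m + 1 by omega, show m + 2 - 2 = m by omega,
    chainA_eq_card_chains (m + 2) hk (by omega)]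
  omega
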